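/- arXiv:2509.08112 — 4 statements merged into one kernel-verified Lean document; each statement's English description precedes it below -/
import Mathlib

section
/- Let λ > 0 and 0 ≤ r ≤ 1. On a probability space with probability measure P, let (B_i)_{i≥1} and (K_i)_{i≥1} be real random variables, all jointly independent, where each B_i has law Exp(λ), K_1 has law Exp(1), and each K_i for i ≥ 2 has law μ_r = (1−r)·δ₀ + r·Exp(1). Then for every integer k ≥ 1 and every u with 0 < u < 1, P(∑_{i=1}^k B_i < ∑_{i=1}^k K_i) ≤ (λ/((λ+u)(1−u))) · [(λ/(λ+u))·(1 + r·u/(1−u))]^{k−1}. -/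
open MeasureTheory ProbabilityTheory

/-- The mixed distribution `(1-r)·δ₀ + r·Exp(1)` on `ℝ`. -/
noncomputable def mixedMeasure (r : ℝ) : Measure ℝ :=
  ENNReal.ofReal (1 - r) • Measure.dirac 0 + ENNReal.ofReal r • expMeasure 1

section ChernoffAux

open Real Set
open scoped ENNReal NNReal

lemma exp_int_expMeasure {θ c : ℝ} (hθ : 0 < θ) (hc : c < θ) :
    Integrable (fun x => Real.exp (c * x)) (expMeasure θ) ∧
      ∫ x, Real.exp (c * x) ∂(expMeasure θ) = θ / (θ - c) := by
  have hb : 0 < θ - c := by linarith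
  have hexp_eq : expMeasure θ
      = volume.withDensity (fun x => ((exponentialPDFReal θ x).toNNReal : ℝ≥0∞)) := rfl
  have hpdf_meas : Measurable fun x => (exponentialPDFReal θ x).toNNReal :=
    (measurable_exponentialPDFReal θ).real_toNNReal
  set h : ℝ → ℝ := fun x => θ * Real.exp (-((θ - c) * x)) with hh
  have hsm : (fun x => ((exponentialPDFReal θ x).toNNReal : ℝ≥0) • Real.exp (c * x))
      = Set.indicator (Ici 0) h := by
    funext x
    rw [NNReal.smul_def, Real.coe_toNNReal _ (exponentialPDFReal_nonneg hθ x)]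
    by_cases hx : (0:ℝ) ≤ x
    · rw [Set.indicator_of_mem (show x ∈ Ici (0:ℝ) from hx)]
      simp only [exponentialPDFReal, gammaPDFReal, if_pos hx, Real.rpow_one, Real.Gamma_one,
        div_one, sub_self, Real.rpow_zero, mul_one, hh]
      rw [smul_eq_mul, mul_assoc, ← Real.exp_add]
      congr 1
      ring
    · rw [Set.indicator_of_notMem (show x ∉ Ici (0:ℝ) from hx)]
      simp [exponentialPDFReal, gammaPDFReal, if_neg hx]
  have hIoi : IntegrableOn h (Ioi (0:ℝ)) volume := by
    rw [hh]
    have := (exp_neg_integrableOn_Ioi 0 hb).const_mul θ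
    simp only [neg_mul] at this
    exact this
  have hIci : IntegrableOn h (Ici (0:ℝ)) volume := by
    rwa [integrableOn_Ici_iff_integrableOn_Ioi]
  have hint : Integrable (Set.indicator (Ici 0) h) volume :=
    hIci.integrable_indicator measurableSet_Ici
  have hval : ∫ x, Set.indicator (Ici 0) h x = θ / (θ - c) := by
    rw [integral_indicator measurableSet_Ici, integral_Ici_eq_integral_Ioi]
    have comp : ∫ x in Ioi (0:ℝ), Real.exp (-((θ - c) * x))
        = (θ - c)⁻¹ * ∫ x in Ioi (0:ℝ), Real.exp (-x) := by
      have := integral_comp_mul_left_Ioi (fun y => Real.exp (-y)) 0 hb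
      simp only [mul_zero, smul_eq_mul] at this
      exact this
    rw [hh]
    simp only []
    rw [integral_const_mul, comp, integral_exp_neg_Ioi, neg_zero, Real.exp_zero]
    field_simp
  constructor
  · rw [hexp_eq, integrable_withDensity_iff_integrable_smul hpdf_meas]
    rw [hsm]; exact hint
  · rw [hexp_eq, integral_withDensity_eq_integral_smul hpdf_meas]
    calc ∫ x, ((exponentialPDFReal θ x).toNNReal : ℝ≥0) • Real.exp (c * x)
        = ∫ x, Set.indicator (Ici 0) h x := by rw [hsm]
      _ = θ / (θ - c) := hval

lemma exp_int_mixed {r u : ℝ} (hr0 : 0 ≤ r) (hr1 : r ≤ 1) (hu1 : u < 1) :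
    Integrable (fun x => Real.exp (u * x)) (mixedMeasure r) ∧
      ∫ x, Real.exp (u * x) ∂(mixedMeasure r) = (1 - r) + r * (1 / (1 - u)) := by
  have h1 := exp_int_expMeasure one_pos hu1
  have hd : Integrable (fun x => Real.exp (u * x)) (Measure.dirac (0:ℝ)) :=
    (integrable_const (Real.exp (u * 0))).congr (ae_eq_dirac fun x => Real.exp (u * x)).symm
  have hint : Integrable (fun x => Real.exp (u * x)) (mixedMeasure r) := by
    unfold mixedMeasure
    exact (hd.smul_measure ENNReal.ofReal_ne_top).add_measure
      (h1.1.smul_measure ENNReal.ofReal_ne_top)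
  refine ⟨hint, ?_⟩
  unfold mixedMeasure
  rw [integral_add_measure (hd.smul_measure ENNReal.ofReal_ne_top)
      (h1.1.smul_measure ENNReal.ofReal_ne_top),
    integral_smul_measure, integral_smul_measure,
    integral_dirac, h1.2,
    ENNReal.toReal_ofReal (by linarith), ENNReal.toReal_ofReal hr0]
  simp [Real.exp_zero]

lemma iIndepFun_congr {Ω ι : Type*} [MeasurableSpace Ω] {μ : Measure Ω}
    {f g : ι → Ω → ℝ}
    (h : iIndepFun f μ)
    (hfg : ∀ i, f i =ᵐ[μ] g i) :
    iIndepFun g μ := by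
  rw [iIndepFun_iff_measure_inter_preimage_eq_mul] at h ⊢
  intro S sets hsets
  have hpre : ∀ i, f i ⁻¹' sets i =ᵐ[μ] g i ⁻¹' sets i := fun i =>
    (hfg i).preimage (sets i)
  have hint : μ (⋂ i ∈ S, g i ⁻¹' sets i) = μ (⋂ i ∈ S, f i ⁻¹' sets i) := by
    refine measure_congr ?_
    have : ∀ᵐ ω ∂μ, ∀ i ∈ S, f i ω = g i ω := by
      have h2 := (MeasureTheory.ae_ball_iff S.countable_toSet).2
        (fun i (_ : i ∈ (S : Set ι)) => hfg i)
      filter_upwards [h2] with ω hω i hi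
      exact hω i hi
    rw [Filter.eventuallyEq_set]
    filter_upwards [this] with ω hω
    simp only [Set.mem_iInter, Set.mem_preimage]
    exact ⟨fun h' i hi => (hω i hi).symm ▸ h' i hi, fun h' i hi => (hω i hi) ▸ h' i hi⟩
  rw [hint, h S hsets]
  exact Finset.prod_congr rfl fun i _ => measure_congr (hpre i)

lemma mixedMeasure_ne_zero {r : ℝ} (hr0 : 0 ≤ r) (hr1 : r ≤ 1) : mixedMeasure r ≠ 0 := by
  have : IsProbabilityMeasure (expMeasure 1) := isProbabilityMeasure_expMeasure one_pos
  intro h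
  have h2 : mixedMeasure r Set.univ = 0 := by rw [h]; rfl
  rw [mixedMeasure] at h2
  simp only [Measure.add_apply, Measure.smul_apply, smul_eq_mul, measure_univ,
    Measure.dirac_apply_of_mem (Set.mem_univ _), mul_one] at h2
  rw [← ENNReal.ofReal_add (by linarith) hr0] at h2
  simp at h2


end ChernoffAux

set_option maxHeartbeats 1000000 in
theorem chernoff_bound_partial_sums {Ω : Type*} [MeasurableSpace Ω] (P : Measure Ω)
    [IsProbabilityMeasure P] (lam r : ℝ) (hlam : 0 < lam) (hr0 : 0 ≤ r) (hr1 : r ≤ 1)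
    (B K : ℕ → Ω → ℝ)
    (hindep : iIndepFun (Sum.elim B K) P)
    (hB : ∀ i, Measure.map (B i) P = expMeasure lam)
    (hK1 : Measure.map (K 0) P = expMeasure 1)
    (hK : ∀ i, Measure.map (K (i + 1)) P = mixedMeasure r) :
    ∀ k : ℕ, 1 ≤ k → ∀ u : ℝ, 0 < u → u < 1 →
      (P {ω | ∑ i ∈ Finset.range k, B i ω < ∑ i ∈ Finset.range k, K i ω}).toReal
        ≤ lam / ((lam + u) * (1 - u)) *
            (lam / (lam + u) * (1 + r * u / (1 - u))) ^ (k - 1) := by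
  have hexpP : IsProbabilityMeasure (expMeasure lam) := isProbabilityMeasure_expMeasure hlam
  have hexp1P : IsProbabilityMeasure (expMeasure 1) := isProbabilityMeasure_expMeasure one_pos
  -- a.e. measurability
  have haeB : ∀ i, AEMeasurable (B i) P := by
    intro i
    by_contra h
    have h0 := Measure.map_of_not_aemeasurable h
    rw [hB i] at h0
    exact (IsProbabilityMeasure.ne_zero (expMeasure lam)) h0
  have haeK : ∀ i, AEMeasurable (K i) P := by
    intro i
    by_contra h
    have h0 := Measure.map_of_not_aemeasurable h
    match i with
    | 0 => rw [hK1] at h0; exact (IsProbabilityMeasure.ne_zero (expMeasure 1)) h0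
    | (j+1) => rw [hK j] at h0; exact mixedMeasure_ne_zero hr0 hr1 h0
  -- measurable modifications
  set B' : ℕ → Ω → ℝ := fun i => (haeB i).mk (B i) with hB'def
  set K' : ℕ → Ω → ℝ := fun i => (haeK i).mk (K i) with hK'def
  have hB'meas : ∀ i, Measurable (B' i) := fun i => (haeB i).measurable_mk
  have hK'meas : ∀ i, Measurable (K' i) := fun i => (haeK i).measurable_mk
  have hB'ae : ∀ i, B i =ᵐ[P] B' i := fun i => (haeB i).ae_eq_mk
  have hK'ae : ∀ i, K i =ᵐ[P] K' i := fun i => (haeK i).ae_eq_mk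
  have hB'map : ∀ i, Measure.map (B' i) P = expMeasure lam := fun i => by
    rw [← Measure.map_congr (hB'ae i)]; exact hB i
  have hK1map : Measure.map (K' 0) P = expMeasure 1 := by
    rw [← Measure.map_congr (hK'ae 0)]; exact hK1
  have hKmap : ∀ i, Measure.map (K' (i + 1)) P = mixedMeasure r := fun i => by
    rw [← Measure.map_congr (hK'ae (i + 1))]; exact hK i
  have hindep' : iIndepFun (Sum.elim B' K') P := by
    refine iIndepFun_congr hindep ?_
    rintro (i | i)
    · exact hB'ae i
    · exact hK'ae i
  intro k hk u hu0 hu1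
  have h1u : 0 < 1 - u := by linarith
  have hlu : 0 < lam + u := by linarith
  -- the tilted variables
  set X : ℕ ⊕ ℕ → Ω → ℝ := fun j =>
    (Sum.elim (fun (_ : ℕ) (x : ℝ) => -u * x) (fun (_ : ℕ) (x : ℝ) => u * x) j)
      ∘ (Sum.elim B' K' j) with hXdef
  have hXindep : iIndepFun X P := by
    refine hindep'.comp _ ?_
    rintro (i | i)
    · exact measurable_const_mul (-u)
    · exact measurable_const_mul u
  have hXmeas : ∀ j, Measurable (X j) := by
    rintro (i | i)
    · exact (measurable_const_mul (-u)).comp (hB'meas i)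
    · exact (measurable_const_mul u).comp (hK'meas i)
  have hcont : ∀ c : ℝ, Continuous fun x : ℝ => Real.exp (c * x) := fun c =>
    Real.continuous_exp.comp (continuous_mul_left c)
  -- integrability and mgf values
  have hBexp := exp_int_expMeasure hlam (show -u < lam by linarith)
  have hK0exp := exp_int_expMeasure one_pos hu1
  have hKexp := exp_int_mixed hr0 hr1 hu1
  have hintX : ∀ j, Integrable (fun ω => Real.exp (1 * X j ω)) P := by
    rintro (i | i)
    · have := (integrable_map_measure
          (hcont (-u)).aestronglyMeasurable
          (hB'meas i).aemeasurable).1 (by rw [hB'map i]; exact hBexp.1)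
      simpa [hXdef, one_mul, Function.comp_def] using this
    · match i with
      | 0 =>
        have := (integrable_map_measure
            (hcont u).aestronglyMeasurable
            (hK'meas 0).aemeasurable).1 (by rw [hK1map]; exact hK0exp.1)
        simpa [hXdef, one_mul, Function.comp_def] using this
      | (j+1) =>
        have := (integrable_map_measure
            (hcont u).aestronglyMeasurable
            (hK'meas (j+1)).aemeasurable).1 (by rw [hKmap j]; exact hKexp.1)
        simpa [hXdef, one_mul, Function.comp_def] using this
  have hmgfB : ∀ i, mgf (X (Sum.inl i)) P 1 = lam / (lam + u) := by
    intro i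
    have hmap := integral_map (μ := P) (hB'meas i).aemeasurable
      (hcont (-u)).aestronglyMeasurable
    rw [hB'map i, hBexp.2] at hmap
    unfold X
    unfold mgf
    simp only [Sum.elim_inl, Function.comp_apply, one_mul]
    rw [← hmap, sub_neg_eq_add]
  have hmgfK0 : mgf (X (Sum.inr 0)) P 1 = 1 / (1 - u) := by
    have hmap := integral_map (μ := P) (hK'meas 0).aemeasurable
      (hcont u).aestronglyMeasurable
    rw [hK1map, hK0exp.2] at hmap
    unfold X
    unfold mgf
    simp only [Sum.elim_inr, Function.comp_apply, one_mul]
    rw [← hmap]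
  have hmgfK : ∀ j, mgf (X (Sum.inr (j + 1))) P 1 = 1 + r * u / (1 - u) := by
    intro j
    have hmap := integral_map (μ := P) (hK'meas (j+1)).aemeasurable
      (hcont u).aestronglyMeasurable
    rw [hKmap j, hKexp.2] at hmap
    unfold X
    unfold mgf
    simp only [Sum.elim_inr, Function.comp_apply, one_mul]
    rw [← hmap]
    field_simp
    ring
  -- the sum
  set s : Finset (ℕ ⊕ ℕ) := (Finset.range k).disjSum (Finset.range k) with hsdef
  set S : Ω → ℝ := ∑ j ∈ s, X j with hSdef
  have hSval : ∀ ω, S ω = u * ((∑ i ∈ Finset.range k, K' i ω)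
      - (∑ i ∈ Finset.range k, B' i ω)) := by
    intro ω
    rw [hSdef, Finset.sum_apply, hsdef, Finset.sum_disjSum]
    simp only [hXdef, Sum.elim_inl, Sum.elim_inr, Function.comp_apply]
    rw [← Finset.mul_sum, ← Finset.mul_sum]
    ring
  -- event comparison
  have hev : P {ω | ∑ i ∈ Finset.range k, B i ω < ∑ i ∈ Finset.range k, K i ω}
      = P {ω | ∑ i ∈ Finset.range k, B' i ω < ∑ i ∈ Finset.range k, K' i ω} := by
    refine measure_congr ?_
    rw [Filter.eventuallyEq_set]
    have hB2 : ∀ᵐ ω ∂P, ∀ i ∈ Finset.range k, B i ω = B' i ω := by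
      have h2 := (MeasureTheory.ae_ball_iff (Finset.range k).countable_toSet).2
        (fun i (_ : i ∈ ((Finset.range k) : Set ℕ)) => hB'ae i)
      filter_upwards [h2] with ω hω i hi
      exact hω i hi
    have hK2 : ∀ᵐ ω ∂P, ∀ i ∈ Finset.range k, K i ω = K' i ω := by
      have h2 := (MeasureTheory.ae_ball_iff (Finset.range k).countable_toSet).2
        (fun i (_ : i ∈ ((Finset.range k) : Set ℕ)) => hK'ae i)
      filter_upwards [h2] with ω hω i hi
      exact hω i hi
    filter_upwards [hB2, hK2] with ω hωB hωK
    show (∑ i ∈ Finset.range k, B i ω < ∑ i ∈ Finset.range k, K i ω)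
      ↔ (∑ i ∈ Finset.range k, B' i ω < ∑ i ∈ Finset.range k, K' i ω)
    rw [Finset.sum_congr rfl hωB, Finset.sum_congr rfl hωK]
  have hsub : {ω | ∑ i ∈ Finset.range k, B' i ω < ∑ i ∈ Finset.range k, K' i ω}
      ⊆ {ω | (0:ℝ) ≤ S ω} := by
    intro ω hω
    simp only [Set.mem_setOf_eq] at hω ⊢
    rw [hSval ω]
    have : (0:ℝ) ≤ (∑ i ∈ Finset.range k, K' i ω) - (∑ i ∈ Finset.range k, B' i ω) := by
      linarith
    positivity
  -- Chernoff
  have hintS : Integrable (fun ω => Real.exp (1 * S ω)) P :=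
    hXindep.integrable_exp_mul_sum hXmeas (fun j _ => hintX j)
  have hchern := measure_ge_le_exp_mul_mgf (μ := P) (X := S) (t := 1) 0 zero_le_one hintS
  rw [neg_mul, mul_zero, neg_zero, Real.exp_zero, one_mul] at hchern
  have hmono : (P {ω | ∑ i ∈ Finset.range k, B i ω < ∑ i ∈ Finset.range k, K i ω}).toReal
      ≤ (P {ω | (0:ℝ) ≤ S ω}).toReal := by
    rw [hev]
    exact ENNReal.toReal_mono (measure_ne_top P _) (measure_mono hsub)
  obtain ⟨m, rfl⟩ : ∃ m, k = m + 1 := ⟨k - 1, (Nat.succ_pred_eq_of_pos hk).symm⟩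
  -- mgf product
  have hprod : mgf S P 1 = (lam / (lam + u)) ^ (m + 1)
      * ((1 + r * u / (1 - u)) ^ m * (1 / (1 - u))) := by
    rw [hSdef, hXindep.mgf_sum hXmeas s, hsdef, Finset.prod_disjSum]
    have h1 : ∏ i ∈ Finset.range (m + 1), mgf (X (Sum.inl i)) P 1
        = (lam / (lam + u)) ^ (m + 1) := by
      rw [Finset.prod_congr rfl (fun i _ => hmgfB i), Finset.prod_const, Finset.card_range]
    have h2 : ∏ i ∈ Finset.range (m + 1), mgf (X (Sum.inr i)) P 1
        = (1 + r * u / (1 - u)) ^ m * (1 / (1 - u)) := by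
      rw [Finset.prod_range_succ']
      rw [Finset.prod_congr rfl (fun i _ => hmgfK i), Finset.prod_const, Finset.card_range,
        hmgfK0]
    rw [h1, h2]
  -- final arithmetic
  have harith : (lam / (lam + u)) ^ (m + 1)
      * ((1 + r * u / (1 - u)) ^ m * (1 / (1 - u)))
      = lam / ((lam + u) * (1 - u)) * (lam / (lam + u) * (1 + r * u / (1 - u))) ^ (m + 1 - 1) := by
    have hne1 : lam + u ≠ 0 := ne_of_gt hlu
    have hne2 : (1:ℝ) - u ≠ 0 := ne_of_gt h1u
    simp only [Nat.add_sub_cancel]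
    rw [pow_succ, mul_pow]
    field_simp
  calc (P {ω | ∑ i ∈ Finset.range (m+1), B i ω < ∑ i ∈ Finset.range (m+1), K i ω}).toReal
      ≤ (P {ω | (0:ℝ) ≤ S ω}).toReal := hmono
    _ ≤ mgf S P 1 := hchern
    _ = lam / ((lam + u) * (1 - u)) * (lam / (lam + u) * (1 + r * u / (1 - u))) ^ (m + 1 - 1) := by
        rw [hprod, harith]
end

section
/- Let λ > 0, 0 ≤ r ≤ 1, and let d ≥ 1 be an integer. On a probability space with probability measure P, let (B_i)_{i≥1} and (K_i)_{i≥1} be real random variables, all jointly independent, where each B_i has law Exp(λ), K_1 has law Exp(1), and each K_i for i ≥ 2 has law μ_r = (1−r)·δ₀ + r·Exp(1). If inf_{0<u<1} { (d·λ/(λ+u))·(1 + r·u/(1−u)) } < 1, then the series ∑_{k=1}^∞ d^k · P(∑_{i=1}^k B_i < ∑_{i=1}^k K_i) converges (is finite). -/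
open MeasureTheory ProbabilityTheory

open Real Set Filter
open scoped NNReal ENNReal
set_option maxHeartbeats 1000000

lemma integral_exp_neg_mul_Ioi {b : ℝ} (hb : 0 < b) :
    ∫ x in Ioi (0:ℝ), exp (-(b * x)) = 1 / b := by
  have := integral_comp_mul_left_Ioi (fun x => exp (-x)) 0 hb
  simp only [mul_zero, integral_exp_neg_Ioi, neg_zero, exp_zero, smul_eq_mul, mul_one] at this
  rw [show (fun x => exp (-(b*x))) = fun x => exp (-(b*x)) from rfl]
  simpa [one_div] using this

lemma exponentialPDFReal_eq (r x : ℝ) :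
    exponentialPDFReal r x = if 0 ≤ x then r * exp (-(r * x)) else 0 := by
  rw [exponentialPDFReal, gammaPDFReal]
  simp only [rpow_one, Real.Gamma_one, div_one, sub_self, rpow_zero, mul_one]

lemma expMeasure_eq (c : ℝ) :
    expMeasure c = volume.withDensity
      (fun x => ((Real.toNNReal (exponentialPDFReal c x) : ℝ≥0) : ENNReal)) := by
  rfl

lemma integrable_exp_mul_expMeasure {c t : ℝ} (hc : 0 < c) (ht : t < c) :
    Integrable (fun x => exp (t * x)) (expMeasure c) := by
  rw [expMeasure_eq]
  rw [integrable_withDensity_iff_integrable_smul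
    ((measurable_exponentialPDFReal c).real_toNNReal)]
  have heq : (fun x => (Real.toNNReal (exponentialPDFReal c x) : ℝ≥0) • exp (t * x))
      = Set.indicator (Ici (0:ℝ)) (fun x => c * exp (-(c - t) * x)) := by
    funext x
    simp only [NNReal.smul_def, NNReal.coe_mk, smul_eq_mul, Set.indicator_apply, mem_Ici]
    rw [Real.coe_toNNReal _ (exponentialPDFReal_nonneg hc x), exponentialPDFReal_eq]
    split_ifs with h
    · rw [mul_assoc, ← Real.exp_add]; ring_nf
    · simp
  rw [heq]
  rw [integrable_indicator_iff measurableSet_Ici]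
  rw [integrableOn_Ici_iff_integrableOn_Ioi]
  exact (exp_neg_integrableOn_Ioi 0 (by linarith)).const_mul c

lemma integral_exp_mul_expMeasure {c t : ℝ} (hc : 0 < c) (ht : t < c) :
    ∫ x, exp (t * x) ∂(expMeasure c) = c / (c - t) := by
  rw [expMeasure_eq, integral_withDensity_eq_integral_smul
    ((measurable_exponentialPDFReal c).real_toNNReal)]
  have heq : (fun x => (Real.toNNReal (exponentialPDFReal c x) : ℝ≥0) • exp (t * x))
      = Set.indicator (Ici (0:ℝ)) (fun x => c * exp (-(c - t) * x)) := by
    funext x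
    simp only [NNReal.smul_def, NNReal.coe_mk, smul_eq_mul, Set.indicator_apply, mem_Ici]
    rw [Real.coe_toNNReal _ (exponentialPDFReal_nonneg hc x), exponentialPDFReal_eq]
    split_ifs with h
    · rw [mul_assoc, ← Real.exp_add]; ring_nf
    · simp
  rw [heq, integral_indicator measurableSet_Ici, integral_Ici_eq_integral_Ioi,
    integral_const_mul]
  simp only [neg_mul]
  rw [show (fun a : ℝ => rexp (-((c-t)*a))) = fun a : ℝ => rexp (-((c-t)*a)) from rfl]
  rw [integral_exp_neg_mul_Ioi (by linarith : (0:ℝ) < c - t)]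
  field_simp


lemma integrable_exp_mul_mixed {r t : ℝ} (ht : t < 1) :
    Integrable (fun x => exp (t * x)) (mixedMeasure r) := by
  have h1 : Integrable (fun x => exp (t * x)) (Measure.dirac (0:ℝ)) := by
    refine (integrable_const (exp (t * 0))).congr ?_
    rw [Filter.EventuallyEq, MeasureTheory.ae_dirac_eq]
    exact Filter.eventually_pure.2 rfl
  have h2 := integrable_exp_mul_expMeasure one_pos ht
  exact (h1.smul_measure ENNReal.ofReal_ne_top).add_measure
    (h2.smul_measure ENNReal.ofReal_ne_top)

lemma integral_exp_mul_mixed {r t : ℝ} (hr0 : 0 ≤ r) (hr1 : r ≤ 1) (ht0 : 0 ≤ t) (ht : t < 1) :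
    ∫ x, exp (t * x) ∂(mixedMeasure r) = 1 + r * t / (1 - t) := by
  have h1 : Integrable (fun x => exp (t * x)) (Measure.dirac (0:ℝ)) := by
    refine (integrable_const (exp (t * 0))).congr ?_
    rw [Filter.EventuallyEq, MeasureTheory.ae_dirac_eq]
    exact Filter.eventually_pure.2 rfl
  have h2 := integrable_exp_mul_expMeasure one_pos ht
  rw [mixedMeasure, integral_add_measure (h1.smul_measure ENNReal.ofReal_ne_top)
    (h2.smul_measure ENNReal.ofReal_ne_top), integral_smul_measure, integral_smul_measure,
    integral_dirac, integral_exp_mul_expMeasure one_pos ht,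
    ENNReal.toReal_ofReal (by linarith), ENNReal.toReal_ofReal hr0]
  have h1t : 1 - t ≠ 0 := by linarith
  simp only [mul_zero, Real.exp_zero]
  field_simp
  linear_combination r * inv_mul_cancel₀ h1t

lemma iIndepFun_congr_ae {Ω ι : Type*} [MeasurableSpace Ω] {P : Measure Ω}
    [IsProbabilityMeasure P] {f g : ι → Ω → ℝ}
    (h : iIndepFun f P)
    (hfg : ∀ i, f i =ᵐ[P] g i) :
    iIndepFun g P := by
  rw [iIndepFun_iff_measure_inter_preimage_eq_mul] at h ⊢
  intro S sets hsets
  have h1 := h S hsets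
  have hae : ∀ i ∈ S, (f i ⁻¹' sets i : Set Ω) =ᵐ[P] (g i ⁻¹' sets i) := by
    intro i _
    filter_upwards [hfg i] with ω hω
    show (f i ω ∈ sets i) = (g i ω ∈ sets i)
    rw [hω]
  have hinter : ((⋂ i ∈ S, f i ⁻¹' sets i : Set Ω)) =ᵐ[P] (⋂ i ∈ S, g i ⁻¹' sets i) := by
    have hball : ∀ᵐ ω ∂P, ∀ i ∈ S, f i ω = g i ω :=
      (MeasureTheory.ae_ball_iff S.countable_toSet).2 fun i _ => hfg i
    filter_upwards [hball] with ω hω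
    show (ω ∈ ⋂ i ∈ S, f i ⁻¹' sets i) = (ω ∈ ⋂ i ∈ S, g i ⁻¹' sets i)
    simp only [Set.mem_iInter, Set.mem_preimage]
    exact eq_iff_iff.mpr ⟨fun h' i hi => (hω i hi) ▸ h' i hi,
      fun h' i hi => (hω i hi).symm ▸ h' i hi⟩
  rw [← measure_congr hinter, h1]
  exact Finset.prod_congr rfl fun i hi => measure_congr (hae i hi)

lemma aemeasurable_of_map_eq {Ω : Type*} [MeasurableSpace Ω] {P : Measure Ω}
    {f : Ω → ℝ} {ν : Measure ℝ} (hν : ν Set.univ ≠ 0) (h : Measure.map f P = ν) :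
    AEMeasurable f P := by
  by_contra hc
  rw [Measure.map_of_not_aemeasurable hc] at h
  exact hν (by rw [← h]; simp)

lemma mixedMeasure_univ {r : ℝ} (hr0 : 0 ≤ r) (hr1 : r ≤ 1) :
    mixedMeasure r Set.univ = 1 := by
  have : IsProbabilityMeasure (expMeasure 1) := isProbabilityMeasure_expMeasure one_pos
  rw [mixedMeasure]
  simp only [Measure.add_apply, Measure.smul_apply, smul_eq_mul, measure_univ, mul_one]
  rw [← ENNReal.ofReal_add (by linarith) hr0]
  norm_num

lemma integral_transfer {Ω : Type*} [MeasurableSpace Ω] {P : Measure Ω}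
    (f : Ω → ℝ) (ν : Measure ℝ) (t : ℝ) (hf : Measurable f) (hmap : Measure.map f P = ν) :
    (∫ ω, Real.exp (t * f ω) ∂P = ∫ x, Real.exp (t * x) ∂ν) ∧
    (Integrable (fun x => Real.exp (t * x)) ν →
      Integrable (fun ω => Real.exp (t * f ω)) P) := by
  have hg : AEStronglyMeasurable (fun x => Real.exp (t * x)) (Measure.map f P) :=
    (Real.measurable_exp.comp (measurable_const.mul measurable_id)).aestronglyMeasurable
  constructor
  · rw [← hmap, integral_map hf.aemeasurable hg]
  · intro hi
    rw [← hmap] at hi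
    exact (integrable_map_measure hg hf.aemeasurable).1 hi

theorem summable_expected_births {Ω : Type*} [MeasurableSpace Ω] (P : Measure Ω)
    [IsProbabilityMeasure P] (lam r : ℝ) (d : ℕ) (hlam : 0 < lam)
    (hr0 : 0 ≤ r) (hr1 : r ≤ 1) (hd : 1 ≤ d)
    (B K : ℕ → Ω → ℝ)
    (hindep : iIndepFun (Sum.elim B K) P)
    (hB : ∀ i, Measure.map (B i) P = expMeasure lam)
    (hK1 : Measure.map (K 0) P = expMeasure 1)
    (hK : ∀ i, Measure.map (K (i + 1)) P = mixedMeasure r)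
    (hinf : (⨅ u : Set.Ioo (0 : ℝ) 1,
      (d : ℝ) * lam / (lam + u) * (1 + r * u / (1 - u))) < 1) :
    Summable (fun k : ℕ => (d : ℝ) ^ k *
      (P {ω | ∑ i ∈ Finset.range k, B i ω < ∑ i ∈ Finset.range k, K i ω}).toReal) := by
  haveI : Nonempty (Set.Ioo (0:ℝ) 1) := ⟨⟨1/2, by norm_num⟩⟩
  haveI hexp1 : IsProbabilityMeasure (expMeasure 1) := isProbabilityMeasure_expMeasure one_pos
  haveI hexplam : IsProbabilityMeasure (expMeasure lam) := isProbabilityMeasure_expMeasure hlam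
  obtain ⟨⟨u, hu0, hu1⟩, hc⟩ := exists_lt_of_ciInf_lt hinf
  have h1u : (0:ℝ) < 1 - u := by linarith
  have hlamu : (0:ℝ) < lam + u := by linarith
  -- measurable versions
  have hBm : ∀ i, AEMeasurable (B i) P := fun i =>
    aemeasurable_of_map_eq (ν := expMeasure lam) (by rw [measure_univ]; exact one_ne_zero) (hB i)
  have hKm : ∀ i, AEMeasurable (K i) P := by
    intro i
    cases i with
    | zero =>
      exact aemeasurable_of_map_eq (ν := expMeasure 1)
        (by rw [measure_univ]; exact one_ne_zero) hK1
    | succ n =>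
      exact aemeasurable_of_map_eq (ν := mixedMeasure r)
        (by rw [mixedMeasure_univ hr0 hr1]; exact one_ne_zero) (hK n)
  set B' : ℕ → Ω → ℝ := fun i => (hBm i).mk (B i) with hB'def
  set K' : ℕ → Ω → ℝ := fun i => (hKm i).mk (K i) with hK'def
  have hB'm : ∀ i, Measurable (B' i) := fun i => (hBm i).measurable_mk
  have hK'm : ∀ i, Measurable (K' i) := fun i => (hKm i).measurable_mk
  have hB'ae : ∀ i, B i =ᵐ[P] B' i := fun i => (hBm i).ae_eq_mk
  have hK'ae : ∀ i, K i =ᵐ[P] K' i := fun i => (hKm i).ae_eq_mk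
  have hB'map : ∀ i, Measure.map (B' i) P = expMeasure lam := fun i => by
    rw [← Measure.map_congr (hB'ae i)]; exact hB i
  have hK'map0 : Measure.map (K' 0) P = expMeasure 1 := by
    rw [← Measure.map_congr (hK'ae 0)]; exact hK1
  have hK'map : ∀ i, Measure.map (K' (i+1)) P = mixedMeasure r := fun i => by
    rw [← Measure.map_congr (hK'ae (i+1))]; exact hK i
  -- independent family Y
  set Y : ℕ ⊕ ℕ → Ω → ℝ := Sum.elim (fun i ω => -(B' i ω)) K' with hYdef
  have hYm : ∀ j, Measurable (Y j) := by rintro (i | i); exacts [(hB'm i).neg, hK'm i]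
  have hT' : iIndepFun
      (Sum.elim B' K') P := by
    refine iIndepFun_congr_ae hindep ?_
    rintro (i | i)
    exacts [hB'ae i, hK'ae i]
  have hY : iIndepFun Y P := by
    have h2 := hT'.comp (Sum.elim (fun _ : ℕ => (fun x : ℝ => -x)) (fun _ : ℕ => id))
      (by rintro (i | i); exacts [measurable_neg, measurable_id])
    convert h2 using 1
    funext j; cases j <;> rfl
  -- rewriting exp integrands
  have hBfun : ∀ i, (fun ω => Real.exp (u * Y (Sum.inl i) ω))
      = fun ω => Real.exp ((-u) * B' i ω) := by
    intro i; funext ω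
    show Real.exp (u * -(B' i ω)) = _
    rw [show u * -(B' i ω) = -u * B' i ω by ring]
  have hKfun : ∀ i, (fun ω => Real.exp (u * Y (Sum.inr i) ω))
      = fun ω => Real.exp (u * K' i ω) := fun i => rfl
  -- integrability of each exp(u * Y j)
  have hint : ∀ j, Integrable (fun ω => Real.exp (u * Y j ω)) P := by
    rintro (i | i)
    · rw [hBfun i]
      exact (integral_transfer (B' i) (expMeasure lam) (-u) (hB'm i) (hB'map i)).2
        (integrable_exp_mul_expMeasure hlam (by linarith))
    · rw [hKfun i]
      cases i with
      | zero =>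
        exact (integral_transfer (K' 0) (expMeasure 1) u (hK'm 0) hK'map0).2
          (integrable_exp_mul_expMeasure one_pos hu1)
      | succ n =>
        exact (integral_transfer (K' (n+1)) (mixedMeasure r) u (hK'm (n+1))
          (hK'map n)).2 (integrable_exp_mul_mixed hu1)
  -- mgf values
  set m : ℝ := 1 + r * u / (1 - u) with hmdef
  have hmgfB : ∀ i, mgf (Y (Sum.inl i)) P u = lam / (lam + u) := by
    intro i
    rw [mgf, hBfun i,
      (integral_transfer (B' i) (expMeasure lam) (-u) (hB'm i) (hB'map i)).1,
      integral_exp_mul_expMeasure hlam (by linarith), sub_neg_eq_add]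
  have hmgfK0 : mgf (Y (Sum.inr 0)) P u = 1 / (1 - u) := by
    rw [mgf]
    rw [hKfun 0, (integral_transfer (K' 0) (expMeasure 1) u (hK'm 0) hK'map0).1,
      integral_exp_mul_expMeasure one_pos hu1]
  have hmgfK : ∀ i, mgf (Y (Sum.inr (i+1))) P u = m := by
    intro i
    rw [mgf]
    rw [hKfun (i+1), (integral_transfer (K' (i+1)) (mixedMeasure r) u (hK'm (i+1)) (hK'map i)).1,
      integral_exp_mul_mixed hr0 hr1 hu0.le hu1]
  -- constants
  set a : ℝ := 1 / (1 - u + r * u) with hadef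
  have hx0 : (0:ℝ) < 1 - u + r * u := by nlinarith
  have hm1 : (1:ℝ) ≤ m := le_add_of_nonneg_right (div_nonneg (mul_nonneg hr0 hu0.le) h1u.le)
  have ha1 : (1:ℝ) ≤ a := by
    rw [hadef, le_div_iff₀ hx0]; nlinarith
  have ham : a * m = 1 / (1 - u) := by
    rw [hadef, hmdef]; field_simp
  set cv : ℝ := (d:ℝ) * lam / (lam + u) * m with hcvdef
  have hcv0 : (0:ℝ) ≤ cv := by
    apply mul_nonneg (div_nonneg (by positivity) hlamu.le); linarith
  have hcv1 : cv < 1 := hc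
  -- product over K factors
  have hQ : ∀ k, ∏ i ∈ Finset.range k, mgf (Y (Sum.inr i)) P u ≤ a * m ^ k := by
    intro k
    cases k with
    | zero => simpa using ha1
    | succ n =>
      rw [Finset.prod_range_succ',
        Finset.prod_congr rfl (fun i _ => hmgfK i), Finset.prod_const, Finset.card_range,
        hmgfK0]
      apply le_of_eq
      rw [pow_succ, ← mul_assoc, mul_comm a (m ^ n), mul_assoc, ham]
  -- ae equality of events
  have hball : ∀ᵐ ω ∂P, ∀ i, B i ω = B' i ω ∧ K i ω = K' i ω :=
    MeasureTheory.ae_all_iff.2 fun i => (hB'ae i).and (hK'ae i)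
  have hPev : ∀ k, P {ω | ∑ i ∈ Finset.range k, B i ω < ∑ i ∈ Finset.range k, K i ω}
      = P {ω | ∑ i ∈ Finset.range k, B' i ω < ∑ i ∈ Finset.range k, K' i ω} := by
    intro k
    apply measure_congr
    filter_upwards [hball] with ω hω
    show (∑ i ∈ Finset.range k, B i ω < ∑ i ∈ Finset.range k, K i ω) =
      (∑ i ∈ Finset.range k, B' i ω < ∑ i ∈ Finset.range k, K' i ω)
    rw [Finset.sum_congr rfl fun i _ => (hω i).1, Finset.sum_congr rfl fun i _ => (hω i).2]
  -- main bound
  have hbound : ∀ k, (d:ℝ)^k *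
      (P {ω | ∑ i ∈ Finset.range k, B i ω < ∑ i ∈ Finset.range k, K i ω}).toReal
      ≤ a * cv ^ k := by
    intro k
    set s : Finset (ℕ ⊕ ℕ) := (Finset.range k).disjSum (Finset.range k) with hsdef
    have hsub : {ω | ∑ i ∈ Finset.range k, B' i ω < ∑ i ∈ Finset.range k, K' i ω} ⊆
        {ω | (0:ℝ) ≤ (∑ j ∈ s, Y j) ω} := by
      intro ω hω
      simp only [Set.mem_setOf_eq] at hω ⊢
      rw [Finset.sum_apply, hsdef, Finset.sum_disjSum]
      have hl : ∑ i ∈ Finset.range k, Y (Sum.inl i) ω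
          = -∑ i ∈ Finset.range k, B' i ω := by
        rw [← Finset.sum_neg_distrib]; rfl
      have hr' : ∑ i ∈ Finset.range k, Y (Sum.inr i) ω
          = ∑ i ∈ Finset.range k, K' i ω := rfl
      rw [hl, hr']; linarith
    have hS_int : Integrable (fun ω => Real.exp (u * (∑ j ∈ s, Y j) ω)) P :=
      hY.integrable_exp_mul_sum hYm (fun j _ => hint j)
    have hch := measure_ge_le_exp_mul_mgf (X := ∑ j ∈ s, Y j) (μ := P) 0 hu0.le hS_int
    simp only [mul_zero, neg_zero, Real.exp_zero, one_mul] at hch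
    have hprod := hY.mgf_sum (t := u) hYm s
    rw [hsdef, Finset.prod_disjSum,
      Finset.prod_congr rfl (fun i _ => hmgfB i), Finset.prod_const, Finset.card_range] at hprod
    have hmgf_le : mgf (∑ j ∈ s, Y j) P u ≤ (lam / (lam + u)) ^ k * (a * m ^ k) := by
      rw [← hsdef] at hprod
      rw [hprod]
      exact mul_le_mul_of_nonneg_left (hQ k) (by positivity)
    have h1 : (P {ω | ∑ i ∈ Finset.range k, B i ω
        < ∑ i ∈ Finset.range k, K i ω}).toReal
        ≤ (lam / (lam + u)) ^ k * (a * m ^ k) := by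
      rw [hPev k]
      exact le_trans (le_trans (ENNReal.toReal_mono (measure_ne_top P _)
        (measure_mono hsub)) hch) hmgf_le
    calc (d:ℝ)^k * (P {ω | ∑ i ∈ Finset.range k, B i ω
          < ∑ i ∈ Finset.range k, K i ω}).toReal
        ≤ (d:ℝ)^k * ((lam / (lam + u)) ^ k * (a * m ^ k)) :=
          mul_le_mul_of_nonneg_left h1 (by positivity)
      _ = a * cv ^ k := by
          rw [hcvdef, show (d:ℝ) * lam / (lam + u) * m = (d:ℝ) * (lam / (lam + u)) * m by ring,
            mul_pow, mul_pow]
          ring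
  refine Summable.of_nonneg_of_le (fun k => by positivity) hbound ?_
  exact (summable_geometric_of_lt_one hcv0 hcv1).mul_left a
end

section
/- Let d ≥ 1 be an integer, r ∈ (0,1), and λ > 0. Then inf_{0<u<1} { (d·λ/(λ+u))·(1 + r·u/(1−u)) } < 1 if and only if λ < 1/(√(d−1) + √(r·d))². -/
set_option maxHeartbeats 1000000 in
theorem inf_lt_one_iff_subcritical (d : ℕ) (r lam : ℝ) (hd : 1 ≤ d)
    (hr0 : 0 < r) (hr1 : r < 1) (hlam : 0 < lam) :
    (⨅ u : Set.Ioo (0 : ℝ) 1,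
        (d : ℝ) * lam / (lam + u) * (1 + r * u / (1 - u))) < 1
      ↔ lam < 1 / (Real.sqrt ((d : ℝ) - 1) + Real.sqrt (r * d)) ^ 2 := by
  have hd1 : (1 : ℝ) ≤ (d : ℝ) := by exact_mod_cast hd
  set s := Real.sqrt ((d : ℝ) - 1) with hsdef
  set t := Real.sqrt (r * d) with htdef
  have hs0 : 0 ≤ s := Real.sqrt_nonneg _
  have hs : s ^ 2 = (d : ℝ) - 1 := Real.sq_sqrt (by linarith)
  have htpos : 0 < t := Real.sqrt_pos.2 (by positivity)
  have ht : t ^ 2 = r * d := Real.sq_sqrt (by positivity)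
  have hst : 0 < s + t := by linarith
  haveI : Nonempty (Set.Ioo (0 : ℝ) 1) := ⟨⟨1/2, by norm_num⟩⟩
  have hbdd : BddBelow (Set.range fun u : Set.Ioo (0 : ℝ) 1 =>
      (d : ℝ) * lam / (lam + u) * (1 + r * u / (1 - u))) := by
    refine ⟨0, ?_⟩
    rintro x ⟨⟨u, hu1, hu2⟩, rfl⟩
    have h1 : (0:ℝ) < lam + u := by linarith
    have h2 : (0:ℝ) < 1 - u := by linarith
    have : (0:ℝ) ≤ (d : ℝ) * lam / (lam + u) := by positivity
    have : (0:ℝ) ≤ 1 + r * u / (1 - u) := by positivity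
    simp only [Set.coe_setOf]
    positivity
  have hkey : ∀ u : ℝ, 0 < u → u < 1 →
      ((d : ℝ) * lam / (lam + u) * (1 + r * u / (1 - u)) < 1 ↔
        u ^ 2 - (1 + lam * ((d : ℝ) * (1 - r) - 1)) * u + lam * ((d : ℝ) - 1) < 0) := by
    intro u hu1 hu2
    have h1 : (0:ℝ) < lam + u := by linarith
    have h2 : (0:ℝ) < 1 - u := by linarith
    rw [show (d : ℝ) * lam / (lam + u) * (1 + r * u / (1 - u)) =
        ((d : ℝ) * lam * (1 - u + r * u)) / ((lam + u) * (1 - u)) by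
      field_simp, div_lt_one (by positivity)]
    constructor <;> intro h <;> nlinarith [h]
  constructor
  · intro h
    obtain ⟨⟨u, hu1, hu2⟩, hfu⟩ := exists_lt_of_ciInf_lt h
    have hg : u ^ 2 - (1 + lam * ((d : ℝ) * (1 - r) - 1)) * u + lam * ((d : ℝ) - 1) < 0 :=
      (hkey u hu1 hu2).mp hfu
    rw [lt_div_iff₀ (by positivity)]
    by_contra hcon
    push_neg at hcon
    -- hcon : 1 ≤ lam * (s + t) ^ 2
    have hdr : (d : ℝ) * (1 - r) - 1 = s ^ 2 - t ^ 2 := by rw [hs, ht]; ring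
    have hdm : (d : ℝ) - 1 = s ^ 2 := hs.symm
    rw [hdr, hdm] at hg
    have h1 : (0:ℝ) ≤ ((s + t) * u - s) ^ 2 := sq_nonneg _
    have h2 : (0:ℝ) ≤ (lam * (s + t) ^ 2 - 1) * (s ^ 2 * (1 - u) + u * t ^ 2) := by
      apply mul_nonneg (by linarith)
      nlinarith [sq_nonneg s, sq_nonneg t]
    have h3 : (s + t) ^ 2 * (u ^ 2 - (1 + lam * (s ^ 2 - t ^ 2)) * u + lam * s ^ 2) < 0 :=
      mul_neg_of_pos_of_neg (by positivity) hg
    nlinarith [h1, h2, h3]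
  · intro h
    rw [lt_div_iff₀ (by positivity)] at h
    -- h : lam * (s + t) ^ 2 < 1
    have hst2 : 0 ≤ lam * (s * t) := by positivity
    set u : ℝ := (1 + lam * ((d : ℝ) * (1 - r) - 1)) / 2 with hudef
    have hdr : (d : ℝ) * (1 - r) - 1 = s ^ 2 - t ^ 2 := by rw [hs, ht]; ring
    have hu1 : 0 < u := by
      rw [hudef, hdr]
      nlinarith [hst2, mul_nonneg hlam.le (sq_nonneg s)]
    have hu2 : u < 1 := by
      rw [hudef, hdr]
      nlinarith [hst2, mul_nonneg hlam.le (sq_nonneg t)]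
    have f1 : 0 < 1 - lam * (s + t) ^ 2 := by linarith
    have f2 : 0 < 1 - lam * (s - t) ^ 2 := by nlinarith [hst2]
    have hq : 0 < (1 + lam * (s ^ 2 - t ^ 2)) ^ 2 - 4 * (lam * s ^ 2) := by
      have := mul_pos f1 f2
      nlinarith [this]
    have hg : u ^ 2 - (1 + lam * ((d : ℝ) * (1 - r) - 1)) * u + lam * ((d : ℝ) - 1) < 0 := by
      rw [hudef, hdr, ← hs]
      nlinarith [hq]
    have hf := (hkey u hu1 hu2).mpr hg
    exact lt_of_le_of_lt (ciInf_le hbdd ⟨u, hu1, hu2⟩) hf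
end

section
/- Let d ≥ 1 be an integer, r ∈ (0,1), and suppose λ = 1/(√(d−1) + √(r·d))². Then inf_{0<u<1} { (d·λ/(λ+u))·(1 + r·u/(1−u)) } = 1. -/
theorem inf_eq_one_at_critical (d : ℕ) (r lam : ℝ) (hd : 1 ≤ d)
    (hr0 : 0 < r) (hr1 : r < 1)
    (hlam : lam = 1 / (Real.sqrt ((d : ℝ) - 1) + Real.sqrt (r * d)) ^ 2) :
    (⨅ u : Set.Ioo (0 : ℝ) 1,
        (d : ℝ) * lam / (lam + u) * (1 + r * u / (1 - u))) = 1 := by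
  have hd1 : (1:ℝ) ≤ (d:ℝ) := by exact_mod_cast hd
  set s := Real.sqrt ((d:ℝ) - 1) with hsdef
  set t := Real.sqrt (r * d) with htdef
  have hs0 : 0 ≤ s := Real.sqrt_nonneg _
  have hs2 : s ^ 2 = (d:ℝ) - 1 := Real.sq_sqrt (by linarith)
  have ht0 : 0 < t := Real.sqrt_pos.mpr (by positivity)
  have ht2 : t ^ 2 = r * d := Real.sq_sqrt (by positivity)
  have hst : 0 < s + t := by linarith
  have hlam0 : 0 < lam := by rw [hlam]; positivity
  have hlam' : lam * (s + t) ^ 2 = 1 := by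
    rw [hlam]; field_simp
  set v : ℝ := s / (s + t) with hvdef
  have hv0 : 0 ≤ v := div_nonneg hs0 hst.le
  have hv1 : v < 1 := (div_lt_one hst).mpr (by linarith)
  -- cleared polynomial identity
  have key : ∀ u : ℝ, 0 < u → u < 1 →
      (d:ℝ) * lam / (lam + u) * (1 + r * u / (1 - u))
        = 1 + (u - v)^2 / ((lam + u) * (1 - u)) := by
    intro u hu0 hu1
    have h1 : (0:ℝ) < lam + u := by linarith
    have h2 : (0:ℝ) < 1 - u := by linarith
    have hclear : (d:ℝ) * lam * (1 - u + r*u) * (s+t)^2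
        = (lam + u) * (1 - u) * (s+t)^2 + (u*(s+t) - s)^2 := by
      linear_combination (-(1-u)) * hs2 + (-u) * ht2
        + ((d:ℝ)*(1-u+r*u) - (1-u)) * hlam'
    have hsq : (u - v)^2 * (s+t)^2 = (u*(s+t) - s)^2 := by
      rw [hvdef]; field_simp
    have hpoly : (d:ℝ) * lam * (1 - u + r*u)
        = (lam + u) * (1 - u) + (u - v)^2 := by
      have hne : (s+t)^2 ≠ 0 := by positivity
      have h' : ((d:ℝ) * lam * (1 - u + r*u)) * (s+t)^2
          = ((lam + u) * (1 - u) + (u - v)^2) * (s+t)^2 := by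
        linear_combination hclear - hsq
      exact mul_right_cancel₀ hne h'
    have hrw : (d:ℝ) * lam / (lam + u) * (1 + r * u / (1 - u))
        = ((lam + u) * (1 - u) + (u - v)^2) / ((lam + u) * (1 - u)) := by
      rw [← hpoly]; field_simp
    rw [hrw, add_div, div_self (by positivity)]
  have hlow : ∀ u : Set.Ioo (0:ℝ) 1,
      1 ≤ (d:ℝ) * lam / (lam + u) * (1 + r * u / (1 - u)) := by
    rintro ⟨u, hu0, hu1⟩
    rw [key u hu0 hu1]
    have h1 : (0:ℝ) < lam + u := by linarith
    have h2 : (0:ℝ) < 1 - u := by linarith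
    have : 0 ≤ (u - v)^2 / ((lam + u) * (1 - u)) := by positivity
    linarith
  haveI : Nonempty (Set.Ioo (0:ℝ) 1) := ⟨⟨1/2, by norm_num, by norm_num⟩⟩
  refine le_antisymm ?_ (le_ciInf hlow)
  refine le_of_forall_pos_le_add ?_
  intro ε hε
  have hXpos : 0 < ε * (lam * (1 - v) / 2) :=
    mul_pos hε (div_pos (mul_pos hlam0 (by linarith)) two_pos)
  set δ : ℝ := min ((1 - v)/2) (Real.sqrt (ε * (lam * (1 - v) / 2))) with hδdef
  have hδ0 : 0 < δ := lt_min (by linarith) (Real.sqrt_pos.mpr hXpos)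
  have hδ1 : δ ≤ (1 - v)/2 := min_le_left _ _
  have hδ2 : δ ^ 2 ≤ ε * (lam * (1 - v) / 2) := by
    have h := min_le_right ((1 - v)/2) (Real.sqrt (ε * (lam * (1 - v) / 2)))
    calc δ ^ 2 ≤ (Real.sqrt (ε * (lam * (1 - v) / 2)))^2 :=
          sq_le_sq' (by linarith [Real.sqrt_nonneg (ε * (lam * (1 - v) / 2))]) h
      _ = ε * (lam * (1 - v) / 2) := Real.sq_sqrt hXpos.le
  have hu0 : 0 < v + δ := by linarith
  have hu1 : v + δ < 1 := by linarith
  have hbdd : BddBelow (Set.range fun u : Set.Ioo (0:ℝ) 1 =>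
      (d:ℝ) * lam / (lam + u) * (1 + r * u / (1 - u))) := by
    refine ⟨1, ?_⟩
    rintro x ⟨y, rfl⟩
    exact hlow y
  have hle := ciInf_le hbdd (⟨v + δ, hu0, hu1⟩ : Set.Ioo (0:ℝ) 1)
  refine hle.trans ?_
  show (d:ℝ) * lam / (lam + (v + δ)) * (1 + r * (v + δ) / (1 - (v + δ))) ≤ 1 + ε
  rw [key (v + δ) hu0 hu1]
  have h1 : (0:ℝ) < lam + (v + δ) := by linarith
  have h2 : (0:ℝ) < 1 - (v + δ) := by linarith
  have hfrac : (v + δ - v)^2 / ((lam + (v + δ)) * (1 - (v + δ))) ≤ ε := by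
    have hnum : (v + δ - v)^2 = δ^2 := by ring
    have hden : lam * ((1 - v)/2) ≤ (lam + (v + δ)) * (1 - (v + δ)) := by
      have h3 : (1 - v)/2 ≤ 1 - (v + δ) := by linarith
      have h4 : lam ≤ lam + (v + δ) := by linarith
      exact mul_le_mul h4 h3 (by linarith) (by linarith)
    have hdpos : 0 < lam * ((1 - v)/2) :=
      mul_pos hlam0 (by linarith)
    calc (v + δ - v)^2 / ((lam + (v + δ)) * (1 - (v + δ)))
          ≤ δ^2 / (lam * ((1 - v)/2)) := by
          rw [hnum]
          exact div_le_div_of_nonneg_left (by positivity) hdpos hden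
      _ ≤ ε := by
          rw [div_le_iff₀ hdpos]
          nlinarith
  linarith
end
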